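/- For all a, b ∈ I_2, the wavelet function ψ⁰(·−a) is orthogonal in L²(ℚ_2, μ) to φ(·−b): ∫_{ℚ_2} ψ⁰(x − a) · conj(φ(x − b)) dμ(x) = 0. -/

import Mathlib

open MeasureTheory

/-- The refinable function: the indicator of `ℤ_2` inside `ℚ_[2]`. -/
noncomputable def phi2 : ℚ_[2] → ℂ :=
  Set.indicator {x : ℚ_[2] | ‖x‖ ≤ 1} 1

/-- The 2-adic Haar wavelet function `ψ⁰(x) = φ(x/2) − φ(x/2 − 1/2)`. -/
noncomputable def psi0 : ℚ_[2] → ℂ :=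
  fun x => phi2 (x / 2) - phi2 (x / 2 - 1 / 2)

/-- The set `I_2` of fractional-part representatives of `ℚ_2/ℤ_2`. -/
def I2 : Set ℚ_[2] :=
  {a | ∃ γ m : ℕ, m < 2 ^ γ ∧ a = (m : ℚ_[2]) / (2 : ℚ_[2]) ^ γ}


/-!
`ψ⁰` is the difference of the indicators of the two halves `B(0, 1/2)` and `B(1, 1/2)` of `ℤ_2`,
which have the same Haar measure, so `∫ ψ⁰ = 0`. Since `ψ⁰` is supported in `ℤ_2` and `φ` is
`ℤ_2`-periodic, `ψ⁰(x - a) φ(x - b) = ψ⁰(x - a) φ(a - b)`, and translation invariance reduces the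
integral to `φ(a - b) ∫ ψ⁰ = 0`.
-/

open Metric

lemma phi2_eq_indicator : phi2 = (closedBall (0 : ℚ_[2]) 1).indicator 1 := by
  rw [phi2]
  congr
  ext x
  exact mem_closedBall_zero_iff.symm

lemma phi2_sub_div_two (x c : ℚ_[2]) :
    phi2 ((x - c) / 2) = (closedBall c 2⁻¹).indicator 1 x := by
  classical
  have h2 : ‖(2 : ℚ_[2])‖ = 2⁻¹ := by exact_mod_cast Padic.norm_p (p := 2)
  have hmem : (x - c) / 2 ∈ closedBall 0 1 ↔ x ∈ closedBall c 2⁻¹ := by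
    rw [mem_closedBall_zero_iff, mem_closedBall, dist_eq_norm, norm_div, h2,
      div_le_iff₀ (by norm_num), one_mul]
  simp only [phi2_eq_indicator, Set.indicator_apply, hmem, Pi.one_apply]

lemma psi0_eq_indicator_sub :
    psi0 = (closedBall (0 : ℚ_[2]) 2⁻¹).indicator 1 - (closedBall 1 2⁻¹).indicator 1 := by
  ext x
  rw [psi0, Pi.sub_apply, ← phi2_sub_div_two x 0, ← phi2_sub_div_two, sub_zero, sub_div]

lemma support_psi0_subset : Function.support psi0 ⊆ closedBall 0 1 := by
  have hball_one : closedBall (1 : ℚ_[2]) 1 = closedBall 0 1 :=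
    IsUltrametricDist.closedBall_eq_of_mem (by simp)
  rw [psi0_eq_indicator_sub]
  refine (Function.support_sub _ _).trans (Set.union_subset ?_ ?_)
  · exact Set.support_indicator_subset.trans (closedBall_subset_closedBall (by norm_num))
  · exact Set.support_indicator_subset.trans
      ((closedBall_subset_closedBall (by norm_num)).trans hball_one.le)

lemma phi2_add_of_mem_closedBall {z : ℚ_[2]} (hz : z ∈ closedBall 0 1) (c : ℚ_[2]) :
    phi2 (z + c) = phi2 c := by
  classical
  have hmem :=
    (IsUltrametricDist.closedBall_openAddSubgroup ℚ_[2] one_pos).add_mem_cancel_left (y := c) hz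
  simp only [phi2_eq_indicator, Set.indicator_apply]
  exact if_congr hmem rfl rfl

lemma psi0_mul_phi2_add (z c : ℚ_[2]) : psi0 z * phi2 (z + c) = psi0 z * phi2 c := by
  by_cases hz : psi0 z = 0
  · simp [hz]
  · rw [phi2_add_of_mem_closedBall (support_psi0_subset hz)]

lemma conj_phi2 (x : ℚ_[2]) : starRingEnd ℂ (phi2 x) = phi2 x := by
  by_cases hx : x ∈ closedBall 0 1 <;> simp [phi2_eq_indicator, hx]

lemma integral_psi0 [MeasurableSpace ℚ_[2]] [BorelSpace ℚ_[2]] (μ : Measure ℚ_[2])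
    [μ.IsAddHaarMeasure] : ∫ x, psi0 x ∂μ = 0 := by
  have hint (c : ℚ_[2]) : Integrable ((closedBall c 2⁻¹).indicator (1 : ℚ_[2] → ℂ)) μ :=
    (integrable_indicator_iff measurableSet_closedBall).2
      (integrableOn_const measure_closedBall_lt_top.ne)
  rw [psi0_eq_indicator_sub, integral_sub' (hint 0) (hint 1)]
  simp only [integral_indicator measurableSet_closedBall, Pi.one_apply, setIntegral_const,
    Measure.addHaar_real_closedBall_center μ 1, sub_self]

theorem wavelet_orthogonal_to_refinable_general [MeasurableSpace ℚ_[2]] [BorelSpace ℚ_[2]]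
    (μ : Measure ℚ_[2]) [μ.IsAddHaarMeasure]
    (a b : ℚ_[2]) :
    ∫ x, psi0 (x - a) * (starRingEnd ℂ) (phi2 (x - b)) ∂μ = 0 := by
  have hmul (x : ℚ_[2]) : psi0 (x - a) * starRingEnd ℂ (phi2 (x - b))
      = psi0 (x - a) * phi2 (a - b) := by
    rw [conj_phi2, ← sub_add_sub_cancel x a b, psi0_mul_phi2_add]
  simp_rw [hmul, integral_mul_const, integral_sub_right_eq_self (fun x ↦ psi0 x), integral_psi0,
    zero_mul]

theorem wavelet_orthogonal_to_refinable [MeasurableSpace ℚ_[2]] [BorelSpace ℚ_[2]]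
    (μ : Measure ℚ_[2]) [μ.IsAddHaarMeasure]
    (hμ : μ {x : ℚ_[2] | ‖x‖ ≤ 1} = 1)
    (a b : ℚ_[2]) (ha : a ∈ I2) (hb : b ∈ I2) :
    ∫ x, psi0 (x - a) * (starRingEnd ℂ) (phi2 (x - b)) ∂μ = 0 :=
  wavelet_orthogonal_to_refinable_general μ a b
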